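/- arXiv:2506.06674 — 4 statements merged into one kernel-verified Lean document; each statement's English description precedes it below -/
import Mathlib

section
/- Let A be a unital Banach algebra, b ∈ A with ‖b‖ ≤ 2π, and let N : A → [0,∞) be a seminorm satisfying N(xy) ≤ ‖x‖·N(y) and N(xy) ≤ N(x)·‖y‖. Then for every w ∈ A and every z ∈ ℂ, N([exp(z·b), w]) ≤ |z|·e^{2π|z|}·N([b, w]). -/
open NormedSpace Finset

lemma seminorm_sum_le' {A : Type*} [NormedRing A] [NormedAlgebra ℂ A]
    (N : Seminorm ℂ A) {ι : Type*} (s : Finset ι) (f : ι → A) :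
    N (∑ i ∈ s, f i) ≤ ∑ i ∈ s, N (f i) := by
  classical
  induction s using Finset.induction with
  | empty => simp
  | insert a s h ih =>
    rw [Finset.sum_insert h, Finset.sum_insert h]
    exact (map_add_le_add N _ _).trans (by gcongr)

/-- In a unital Banach algebra, if `‖b‖ ≤ 2π` and `N` is a seminorm with
`N(xy) ≤ ‖x‖·N(y)` and `N(xy) ≤ N(x)·‖y‖`, then for every `w` and every `z ∈ ℂ`,
`N([exp(z·b), w]) ≤ |z| e^{2π|z|} N([b, w])`. -/
theorem stmt_4 {A : Type*} [NormedRing A] [NormOneClass A] [NormedAlgebra ℂ A]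
    [CompleteSpace A] (N : Seminorm ℂ A)
    (hNl : ∀ x y : A, N (x * y) ≤ ‖x‖ * N y)
    (hNr : ∀ x y : A, N (x * y) ≤ N x * ‖y‖)
    (b : A) (hb : ‖b‖ ≤ 2 * Real.pi) :
    ∀ (w : A) (z : ℂ),
      N (NormedSpace.exp (z • b) * w - w * NormedSpace.exp (z • b)) ≤
        ‖z‖ * Real.exp (2 * Real.pi * ‖z‖) * N (b * w - w * b) := by
  intro w z
  set C : ℝ := N (b * w - w * b) with hC
  have hC0 : 0 ≤ C := apply_nonneg _ _
  have hπ : (0 : ℝ) ≤ 2 * Real.pi := by positivity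
  -- commutator estimate for powers
  have hbk : ∀ k : ℕ, N (b ^ (k + 1) * w - w * b ^ (k + 1)) ≤
      (k + 1) * (2 * Real.pi) ^ k * C := by
    intro k
    induction k with
    | zero => simp [hC]
    | succ k ih =>
      have key : b ^ (k + 2) * w - w * b ^ (k + 2)
          = b * (b ^ (k + 1) * w - w * b ^ (k + 1)) + (b * w - w * b) * b ^ (k + 1) := by
        have h1 : b ^ (k + 2) = b * b ^ (k + 1) := by rw [pow_succ']
        rw [h1]
        noncomm_ring
      have hnb : ‖b ^ (k + 1)‖ ≤ (2 * Real.pi) ^ (k + 1) :=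
        (norm_pow_le' b (Nat.succ_pos k)).trans (pow_le_pow_left₀ (norm_nonneg b) hb _)
      calc N (b ^ (k + 2) * w - w * b ^ (k + 2))
          ≤ N (b * (b ^ (k + 1) * w - w * b ^ (k + 1))) + N ((b * w - w * b) * b ^ (k + 1)) := by
            rw [key]; exact map_add_le_add N _ _
        _ ≤ ‖b‖ * N (b ^ (k + 1) * w - w * b ^ (k + 1)) + C * ‖b ^ (k + 1)‖ :=
            add_le_add (hNl _ _) (hNr _ _)
        _ ≤ (2 * Real.pi) * ((k + 1) * (2 * Real.pi) ^ k * C) + C * (2 * Real.pi) ^ (k + 1) := by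
            gcongr <;> first
              | exact (norm_nonneg b).trans hb
              | exact hb
              | exact ih
              | exact hnb
              | positivity
        _ = (↑(k + 1) + 1) * (2 * Real.pi) ^ (k + 1) * C := by push_cast; ring
  -- the series coefficients
  set c : ℕ → ℂ := fun n => (Nat.factorial n : ℂ)⁻¹ * z ^ n with hc
  have hs : Summable fun n => c n • b ^ n := by
    have := expSeries_summable' (𝕂 := ℂ) (z • b)
    simpa [hc, smul_pow, smul_smul] using this
  have h1 : Summable fun n => c n • (b ^ n * w) := by
    simpa [smul_mul_assoc] using hs.mul_right w
  have h2 : Summable fun n => c n • (w * b ^ n) := by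
    simpa [mul_smul_comm] using hs.mul_left w
  have hg : Summable fun n => c n • (b ^ n * w - w * b ^ n) := by
    simpa [smul_sub] using h1.sub h2
  have heq : NormedSpace.exp (z • b) * w - w * NormedSpace.exp (z • b)
      = ∑' n : ℕ, c n • (b ^ n * w - w * b ^ n) := by
    have hexp : NormedSpace.exp (z • b) = ∑' n : ℕ, c n • b ^ n := by
      rw [exp_eq_tsum (𝕂 := ℂ)]
      simp only [hc, smul_pow, smul_smul]
    rw [hexp, ← hs.tsum_mul_right w, ← hs.tsum_mul_left w]
    simp only [smul_mul_assoc, mul_smul_comm]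
    rw [← Summable.tsum_sub h1 h2]
    simp [smul_sub]
  -- the real bound series
  set u : ℕ → ℝ := fun n => match n with
    | 0 => 0
    | (k + 1) => ‖z‖ * ((2 * Real.pi * ‖z‖) ^ k / (Nat.factorial k : ℝ)) * C with hu
  have hu0 : ∀ n, 0 ≤ u n := by
    intro n
    cases n with
    | zero => simp [hu]
    | succ k =>
      have : (0:ℝ) ≤ (2 * Real.pi * ‖z‖) ^ k / (Nat.factorial k : ℝ) := by positivity
      simpa [hu] using mul_nonneg (mul_nonneg (norm_nonneg z) this) hC0
  have husum : Summable u := by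
    rw [← summable_nat_add_iff 1]
    simpa [hu] using
      (((Real.summable_pow_div_factorial (2 * Real.pi * ‖z‖)).mul_left
        (‖z‖)).mul_right C)
  have hterm : ∀ n, N (c n • (b ^ n * w - w * b ^ n)) ≤ u n := by
    intro n
    cases n with
    | zero => simp [hu, hc]
    | succ k =>
      have hcn : ‖c (k + 1)‖ = ‖z‖ ^ (k + 1) / (Nat.factorial (k + 1) : ℝ) := by
        simp [hc, norm_mul, norm_inv, norm_pow, div_eq_inv_mul,
          Complex.norm_natCast]
      calc N (c (k + 1) • (b ^ (k + 1) * w - w * b ^ (k + 1)))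
          = ‖c (k + 1)‖ * N (b ^ (k + 1) * w - w * b ^ (k + 1)) := map_smul_eq_mul N _ _
        _ ≤ (‖z‖ ^ (k + 1) / (Nat.factorial (k + 1) : ℝ)) * ((k + 1) * (2 * Real.pi) ^ k * C) := by
            rw [hcn]
            exact mul_le_mul_of_nonneg_left (hbk k) (by positivity)
        _ = u (k + 1) := by
            simp only [hu]
            rw [Nat.factorial_succ]
            push_cast
            rw [mul_pow]
            have hk : ((Nat.factorial k : ℕ) : ℝ) ≠ 0 := Nat.cast_ne_zero.mpr (Nat.factorial_ne_zero k)
            field_simp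
            ring
  -- continuity of N
  have hcont : Continuous N := by
    have hlip : LipschitzWith (N 1).toNNReal N := by
      refine LipschitzWith.of_dist_le_mul fun x y => ?_
      have h1' : dist (N x) (N y) ≤ N (x - y) := by
        rw [Real.dist_eq, ← Real.norm_eq_abs]
        exact N.norm_sub_map_le_sub x y
      have h2' : N (x - y) ≤ ‖x - y‖ * N 1 := by simpa using hNl (x - y) 1
      calc dist (N x) (N y) ≤ ‖x - y‖ * N 1 := h1'.trans h2'
        _ = N 1 * dist x y := by rw [dist_eq_norm]; ring
        _ ≤ (N 1).toNNReal * dist x y :=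
            mul_le_mul_of_nonneg_right (Real.le_coe_toNNReal _) dist_nonneg
    exact hlip.continuous
  -- conclude
  have hmain : N (∑' n : ℕ, c n • (b ^ n * w - w * b ^ n)) ≤ ∑' n, u n := by
    have htend : Filter.Tendsto (fun s => N (∑ i ∈ Finset.range s, c i • (b ^ i * w - w * b ^ i)))
        Filter.atTop (nhds (N (∑' n : ℕ, c n • (b ^ n * w - w * b ^ n)))) :=
      (hcont.tendsto _).comp hg.hasSum.tendsto_sum_nat
    refine le_of_tendsto htend (Filter.Eventually.of_forall fun s => ?_)
    calc N (∑ i ∈ Finset.range s, c i • (b ^ i * w - w * b ^ i))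
        ≤ ∑ i ∈ Finset.range s, N (c i • (b ^ i * w - w * b ^ i)) := seminorm_sum_le' N _ _
      _ ≤ ∑ i ∈ Finset.range s, u i := Finset.sum_le_sum fun i _ => hterm i
      _ ≤ ∑' n, u n := Summable.sum_le_tsum _ (fun i _ => hu0 i) husum
  have htsum : ∑' n, u n = ‖z‖ * Real.exp (2 * Real.pi * ‖z‖) * C := by
    rw [Summable.tsum_eq_zero_add husum]
    simp only [hu]
    rw [tsum_mul_right, tsum_mul_left]
    rw [Real.exp_eq_exp_ℝ, exp_eq_tsum_div]
    ring
  rw [heq]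
  exact hmain.trans_eq htsum
end

section
/- Let H be a Hilbert space, K a closed subspace, P the orthogonal projection onto K, and T ∈ B(H). If T is bounded below (∃δ>0 with ‖Tx‖ ≥ δ‖x‖ for all x) and the 'Hankel part' x ↦ (1−P)Tx restricted to K is a compact operator, then the 'Toeplitz part' x ↦ P(Tx), as an operator from K to H, is upper semi-Fredholm: it has closed range and finite-dimensional kernel. -/
open ContinuousLinearMap Set Metric Filter Topology

private lemma semiFredholm_aux {E F : Type*} [NormedAddCommGroup E] [InnerProductSpace ℂ E]
    [CompleteSpace E] [NormedAddCommGroup F] [NormedSpace ℂ F]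
    (A C : E →L[ℂ] F) (δ : ℝ) (hδ : 0 < δ) (hA : ∀ x, δ * ‖x‖ ≤ ‖A x‖)
    (hC : IsCompactOperator C) :
    IsClosed (Set.range (A - C) : Set F) ∧ FiniteDimensional ℂ (LinearMap.ker ((A - C : E →L[ℂ] F) : E →ₗ[ℂ] F)) := by
  set S : E →L[ℂ] F := A - C with hS
  obtain ⟨Q, hQc, hQ⟩ := hC.image_closedBall_subset_compact (1 : ℝ)
  set N : Submodule ℂ E := LinearMap.ker (S : E →ₗ[ℂ] F) with hN
  have hNclosed : IsClosed (N : Set E) := isClosed_ker S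
  haveI : CompleteSpace N := hNclosed.completeSpace_coe
  have hbound : ∀ x : E, ‖x‖ ≤ δ⁻¹ * ‖A x‖ := fun x => by
    rw [le_inv_mul_iff₀ hδ]; exact hA x
  have hAC : ∀ x : N, A (x : E) = C (x : E) := fun x =>
    sub_eq_zero.mp (x.2 : S (x : E) = 0)
  -- FINITE DIMENSIONAL KERNEL
  have hfd : FiniteDimensional ℂ N := by
    set g : N →L[ℂ] F := C ∘L N.subtypeL with hg
    have hganti : AntilipschitzWith ⟨δ⁻¹, by positivity⟩ g := by
      apply ContinuousLinearMap.antilipschitz_of_bound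
      intro x
      have := hbound (x : E)
      rw [hAC x] at this
      exact this
    have hui : IsUniformInducing g := hganti.isUniformInducing g.uniformContinuous
    have htb : TotallyBounded (g '' closedBall (0 : N) 1) := by
      refine hQc.totallyBounded.subset (subset_trans ?_ hQ)
      rintro - ⟨x, hx, rfl⟩
      exact ⟨(x : E), by simpa [mem_closedBall, dist_eq_norm] using hx, rfl⟩
    have htb' : TotallyBounded (closedBall (0 : N) 1) :=
      (totallyBounded_image_iff hui).mp htb
    exact FiniteDimensional.of_isCompact_closedBall₀ ℂ one_pos
      (TotallyBounded.isCompact_of_isClosed htb' isClosed_closedBall)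
  refine ⟨?_, hfd⟩
  -- CLOSED RANGE
  set M : Submodule ℂ E := Nᗮ with hM
  haveI : CompleteSpace M := N.isClosed_orthogonal.completeSpace_coe
  have hSb : ∃ c > 0, ∀ x : M, c * ‖x‖ ≤ ‖S (x : E)‖ := by
    by_contra hcon
    push_neg at hcon
    have hseq : ∀ n : ℕ, ∃ u : M, ‖u‖ = 1 ∧ ‖S (u : E)‖ < 1 / (n + 1) := by
      intro n
      obtain ⟨x, hx⟩ := hcon (1 / (n + 1)) (by positivity)
      have hx0 : x ≠ 0 := by rintro rfl; simp at hx
      have hxn : (0:ℝ) < ‖x‖ := norm_pos_iff.mpr hx0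
      refine ⟨(‖x‖⁻¹ : ℝ) • x, ?_, ?_⟩
      · rw [norm_smul, norm_inv, norm_norm, inv_mul_cancel₀ hxn.ne']
      · have hsm : S ((((‖x‖⁻¹ : ℝ) • x : M)) : E) = (‖x‖⁻¹ : ℝ) • S (x : E) := by
          rw [Submodule.coe_smul_of_tower, map_smul_of_tower]
        rw [hsm, norm_smul, norm_inv, norm_norm, inv_mul_lt_iff₀ hxn]
        calc ‖S (x : E)‖ < 1 / (n+1) * ‖x‖ := hx
          _ = ‖x‖ * (1 / (n+1)) := by ring
    choose u hu1 hu2 using hseq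
    have hSu : Tendsto (fun n => S ((u n : E))) atTop (nhds 0) := by
      rw [tendsto_iff_norm_sub_tendsto_zero]
      simp only [sub_zero]
      refine squeeze_zero (fun n => norm_nonneg _) (fun n => (hu2 n).le) ?_
      exact tendsto_one_div_add_atTop_nhds_zero_nat
    have hmem : ∀ n, C ((u n : E)) ∈ Q := by
      intro n
      refine hQ ⟨(u n : E), ?_, rfl⟩
      have : ‖((u n : E))‖ = ‖u n‖ := rfl
      simp [mem_closedBall, dist_eq_norm, this, hu1 n]
    obtain ⟨y, -, φ, hφ, hCy⟩ := hQc.tendsto_subseq hmem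
    have hAy : Tendsto (fun n => A ((u (φ n) : E))) atTop (nhds y) := by
      have heq : (fun n => A ((u (φ n) : E))) =
          fun n => S ((u (φ n) : E)) + C ((u (φ n) : E)) := by
        funext n; simp [hS]
      rw [heq]
      simpa using ((hSu.comp hφ.tendsto_atTop).add hCy)
    have hanti : AntilipschitzWith ⟨δ⁻¹, by positivity⟩ A :=
      ContinuousLinearMap.antilipschitz_of_bound A hbound
    have hcauchy : CauchySeq fun n => ((u (φ n) : E)) := by
      have hui : IsUniformInducing A := hanti.isUniformInducing A.uniformContinuous
      have h1 : CauchySeq fun n => A ((u (φ n) : E)) := hAy.cauchySeq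
      have h2 : (fun n => A ((u (φ n) : E))) = ⇑A ∘ (fun n => ((u (φ n) : E))) := rfl
      rw [CauchySeq, h2, ← Filter.map_map] at h1
      exact hui.cauchy_map_iff.mp h1
    obtain ⟨x, hx⟩ := cauchySeq_tendsto_of_complete hcauchy
    have hxM : x ∈ M :=
      N.isClosed_orthogonal.mem_of_tendsto hx (Eventually.of_forall fun n => (u (φ n)).2)
    have hxnorm : ‖x‖ = 1 := by
      have h1 := (continuous_norm.tendsto x).comp hx
      have h2 : Tendsto (fun n => ‖((u (φ n) : E))‖) atTop (nhds 1) := by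
        have heq : (fun n => ‖((u (φ n) : E))‖) = fun _ => (1:ℝ) := by
          funext n; exact hu1 (φ n)
        rw [heq]; exact tendsto_const_nhds
      exact tendsto_nhds_unique h1 h2
    have hxN : x ∈ N := by
      have h1 : Tendsto (fun n => S ((u (φ n) : E))) atTop (nhds (S x)) :=
        (S.continuous.tendsto x).comp hx
      exact (tendsto_nhds_unique h1 (hSu.comp hφ.tendsto_atTop) : S x = 0)
    have : x = 0 := (Submodule.disjoint_def.mp N.orthogonal_disjoint) x hxN hxM
    rw [this, norm_zero] at hxnorm
    norm_num at hxnorm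
  obtain ⟨c, hc, hcb⟩ := hSb
  set SM : M →L[ℂ] F := S ∘L M.subtypeL with hSM
  have hSManti : AntilipschitzWith ⟨c⁻¹, by positivity⟩ SM := by
    apply ContinuousLinearMap.antilipschitz_of_bound
    intro x
    show ‖x‖ ≤ c⁻¹ * ‖SM x‖
    rw [le_inv_mul_iff₀ hc]
    exact hcb x
  have hclosedM : IsClosed (Set.range SM : Set F) :=
    hSManti.isClosed_range SM.uniformContinuous
  have hrange : (Set.range S : Set F) = Set.range SM := by
    apply Set.Subset.antisymm
    · rintro - ⟨x, rfl⟩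
      obtain ⟨y, hy, z, hz, rfl⟩ := N.exists_add_mem_mem_orthogonal x
      refine ⟨⟨z, hz⟩, ?_⟩
      have hy0 : S y = 0 := hy
      simp [hSM, map_add, hy0]
    · rintro - ⟨x, rfl⟩
      exact ⟨(x : E), rfl⟩
  rw [show (Set.range (A - C) : Set F) = Set.range S from rfl, hrange]
  exact hclosedM

/-- Let `K` be a closed subspace of a Hilbert space `H` with orthogonal projection `P`,
and `T ∈ B(H)` bounded below.  If the Hankel part `x ↦ (1-P)Tx` restricted to `K` is a
compact operator, then the Toeplitz part `x ↦ P(Tx)`, as an operator from `K` to `H`,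
is upper semi-Fredholm: it has closed range and finite-dimensional kernel. -/
theorem stmt_9 {H : Type*} [NormedAddCommGroup H] [InnerProductSpace ℂ H] [CompleteSpace H]
    (K : Submodule ℂ H) [CompleteSpace K] (T : H →L[ℂ] H)
    (δ : ℝ) (hδ : 0 < δ) (hbb : ∀ x : H, δ * ‖x‖ ≤ ‖T x‖)
    (hHankel : IsCompactOperator
      ((T ∘L K.subtypeL) - ((K.subtypeL ∘L K.orthogonalProjectionOnto) ∘L (T ∘L K.subtypeL)))) :
    IsClosed (Set.range ((K.subtypeL ∘L K.orthogonalProjectionOnto) ∘L (T ∘L K.subtypeL)) : Set H) ∧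
    FiniteDimensional ℂ
      (LinearMap.ker (((K.subtypeL ∘L K.orthogonalProjectionOnto) ∘L (T ∘L K.subtypeL) : K →L[ℂ] H) : K →ₗ[ℂ] H)) := by
  have key := semiFredholm_aux (T ∘L K.subtypeL)
    ((T ∘L K.subtypeL) - ((K.subtypeL ∘L K.orthogonalProjectionOnto) ∘L (T ∘L K.subtypeL)))
    δ hδ (fun x => by simpa using hbb x) hHankel
  rwa [sub_sub_cancel] at key
end

section
/- Let H be a Hilbert space, P an orthogonal projection with range H² ⊆ H, and u ∈ B(H) a unitary. Define T_u : H² → H² by T_u x = P(u x). If there exists a ∈ B(H) with a H² ⊆ H² and ‖u − a‖ < 1, then T_u is bounded below. -/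
/-- Let `H²` be a closed subspace of a Hilbert space `H` with orthogonal projection `P`,
and `u ∈ B(H)` a unitary.  If there exists `a ∈ B(H)` with `a H² ⊆ H²` and `‖u − a‖ < 1`,
then the Toeplitz operator `T_u : H² → H², x ↦ P(ux)` is bounded below. -/
theorem stmt_10 {H : Type*} [NormedAddCommGroup H] [InnerProductSpace ℂ H] [CompleteSpace H]
    (H2 : Submodule ℂ H) [CompleteSpace H2]
    (u : H →L[ℂ] H) (hu : u ∈ unitary (H →L[ℂ] H))
    (a : H →L[ℂ] H) (ha : ∀ x ∈ H2, a x ∈ H2) (hna : ‖u - a‖ < 1) :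
    ∃ δ : ℝ, 0 < δ ∧ ∀ x : H2, δ * ‖x‖ ≤ ‖Submodule.orthogonalProjection H2 (u x)‖ := by
  set r : ℝ := ‖u - a‖ with hr
  have hr0 : 0 ≤ r := norm_nonneg _
  have hδpos : 0 < Real.sqrt (1 - r ^ 2) := by
    apply Real.sqrt_pos.2; nlinarith
  refine ⟨Real.sqrt (1 - r ^ 2), hδpos, fun x => ?_⟩
  set y : H := u x with hy
  have hnormy : ‖y‖ = ‖x‖ := by
    rw [hy, u.norm_map_of_mem_unitary hu]
    exact rfl
  -- bound on the orthogonal part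
  have hQa : Submodule.orthogonalProjection H2ᗮ (a x) = 0 :=
    Submodule.orthogonalProjectionOnto_apply_of_mem_orthogonal
      (H2.le_orthogonal_orthogonal (ha x x.2))
  have hQ : ‖(Submodule.orthogonalProjection H2ᗮ y : H)‖ ≤ r * ‖x‖ := by
    have h1 : Submodule.orthogonalProjection H2ᗮ y = Submodule.orthogonalProjection H2ᗮ (y - a x) := by
      rw [map_sub, hQa, sub_zero]
    have h2 : ‖(Submodule.orthogonalProjection H2ᗮ (y - a x) : H)‖ ≤ ‖y - a x‖ := by
      calc ‖(Submodule.orthogonalProjection H2ᗮ (y - a x) : H)‖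
          = ‖Submodule.orthogonalProjection H2ᗮ (y - a x)‖ := rfl
        _ ≤ ‖Submodule.orthogonalProjection H2ᗮ‖ * ‖y - a x‖ := (Submodule.orthogonalProjection H2ᗮ).le_opNorm _
        _ ≤ 1 * ‖y - a x‖ := by
            exact mul_le_mul_of_nonneg_right (Submodule.orthogonalProjection_norm_le _) (norm_nonneg _)
        _ = ‖y - a x‖ := one_mul _
    have h3 : ‖y - a x‖ ≤ r * ‖x‖ := by
      have := (u - a).le_opNorm (x : H)
      simpa [hy] using this
    rw [h1]; exact h2.trans h3
  have hpyth : ‖y‖ ^ 2 = ‖Submodule.orthogonalProjection H2 y‖ ^ 2 +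
      ‖Submodule.orthogonalProjection H2ᗮ y‖ ^ 2 := Submodule.norm_sq_eq_add_norm_sq_projection y H2
  have hQ' : ‖Submodule.orthogonalProjection H2ᗮ y‖ ≤ r * ‖x‖ := hQ
  have hsq : (Real.sqrt (1 - r ^ 2) * ‖x‖) ^ 2 ≤ ‖Submodule.orthogonalProjection H2 y‖ ^ 2 := by
    rw [mul_pow, Real.sq_sqrt (by nlinarith : (0:ℝ) ≤ 1 - r ^ 2)]
    have hQn : 0 ≤ ‖Submodule.orthogonalProjection H2ᗮ y‖ := norm_nonneg _
    nlinarith [norm_nonneg x]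
  have := Real.sqrt_le_sqrt hsq
  rwa [Real.sqrt_sq (by positivity), Real.sqrt_sq (norm_nonneg _)] at this
end

section
/- Let H be a Hilbert space decomposed as an orthogonal direct sum H = H₁ ⊕ H₂ ⊕ H₃, and let S be a closed densely defined antilinear operator on H whose domain 𝔉 satisfies p_i(𝔉) ⊆ 𝔉 for the orthogonal projections p_i onto H_i, and such that S(p₁(𝔉)) ⊆ H₃, S(p₂(𝔉)) ⊆ H₂, S(p₃(𝔉)) ⊆ H₁. Then the positive selfadjoint operator Δ = S*S leaves each H_i invariant in the sense that Δ commutes with each projection p_i (i.e., p_iΔ ⊆ Δp_i). -/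
open scoped InnerProductSpace

/-- Let `H = H₁ ⊕ H₂ ⊕ H₃` be an orthogonal decomposition of a Hilbert space and `S` a
closed densely defined antilinear operator (with domain `dS`) whose domain is preserved
by the orthogonal projections `pᵢ` onto `Hᵢ` and such that `S(p₁(dS)) ⊆ H₃`,
`S(p₂(dS)) ⊆ H₂`, `S(p₃(dS)) ⊆ H₁`.  Let `T = S*` be the (antilinear) adjoint of `S`,
characterized by `⟨S*η, ξ⟩ = conj ⟨Sξ, η⟩` on its maximal domain `dT`.  Then
`Δ = S*S` commutes with each projection `pᵢ` in the sense `pᵢ Δ ⊆ Δ pᵢ`: for every `x`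
in the domain of `Δ`, `pᵢ x` is in the domain of `Δ` and `Δ(pᵢ x) = pᵢ(Δ x)`. -/
theorem stmt_18 {H : Type*} [NormedAddCommGroup H] [InnerProductSpace ℂ H] [CompleteSpace H]
    (H1 H2 H3 : Submodule ℂ H) [CompleteSpace H1] [CompleteSpace H2] [CompleteSpace H3]
    (h12 : H2 ≤ H1ᗮ) (h13 : H3 ≤ H1ᗮ) (h23 : H3 ≤ H2ᗮ)
    (hsum : H1 ⊔ H2 ⊔ H3 = ⊤)
    (dS : Set H) (hdense : Dense dS) (S : H → H)
    (hdom_add : ∀ x ∈ dS, ∀ y ∈ dS, x + y ∈ dS)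
    (hdom_smul : ∀ (c : ℂ), ∀ x ∈ dS, c • x ∈ dS)
    (hS_add : ∀ x ∈ dS, ∀ y ∈ dS, S (x + y) = S x + S y)
    (hS_smul : ∀ (c : ℂ), ∀ x ∈ dS, S (c • x) = (starRingEnd ℂ c) • S x)
    (hclosed : IsClosed {p : H × H | p.1 ∈ dS ∧ p.2 = S p.1})
    (hp1dom : ∀ x ∈ dS, ((H1.orthogonalProjectionOnto x : H) ∈ dS))
    (hp2dom : ∀ x ∈ dS, ((H2.orthogonalProjectionOnto x : H) ∈ dS))
    (hp3dom : ∀ x ∈ dS, ((H3.orthogonalProjectionOnto x : H) ∈ dS))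
    (hS1 : ∀ x ∈ dS, S ((H1.orthogonalProjectionOnto x : H)) ∈ H3)
    (hS2 : ∀ x ∈ dS, S ((H2.orthogonalProjectionOnto x : H)) ∈ H2)
    (hS3 : ∀ x ∈ dS, S ((H3.orthogonalProjectionOnto x : H)) ∈ H1)
    (dT : Set H) (T : H → H)
    (hdT : ∀ η : H, η ∈ dT ↔ ∃ ζ : H, ∀ ξ ∈ dS, ⟪ζ, ξ⟫_ℂ = star ⟪S ξ, η⟫_ℂ)
    (hT : ∀ η ∈ dT, ∀ ξ ∈ dS, ⟪T η, ξ⟫_ℂ = star ⟪S ξ, η⟫_ℂ) :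
    ∀ x : H, x ∈ dS → S x ∈ dT →
      (((H1.orthogonalProjectionOnto x : H) ∈ dS ∧ S ((H1.orthogonalProjectionOnto x : H)) ∈ dT) ∧
        T (S ((H1.orthogonalProjectionOnto x : H))) = (H1.orthogonalProjectionOnto (T (S x)) : H)) ∧
      (((H2.orthogonalProjectionOnto x : H) ∈ dS ∧ S ((H2.orthogonalProjectionOnto x : H)) ∈ dT) ∧
        T (S ((H2.orthogonalProjectionOnto x : H))) = (H2.orthogonalProjectionOnto (T (S x)) : H)) ∧
      (((H3.orthogonalProjectionOnto x : H) ∈ dS ∧ S ((H3.orthogonalProjectionOnto x : H)) ∈ dT) ∧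
        T (S ((H3.orthogonalProjectionOnto x : H))) = (H3.orthogonalProjectionOnto (T (S x)) : H)) := by
  intro x hx hSx
  -- swap orthogonality
  have swap : ∀ {A B : Submodule ℂ H}, B ≤ Aᗮ → A ≤ Bᗮ := by
    intro A B h a ha
    exact (Submodule.mem_orthogonal _ _).mpr fun b hb =>
      inner_eq_zero_symm.mp (((Submodule.mem_orthogonal _ _).mp (h hb)) a ha)
  have oz : ∀ {A B : Submodule ℂ H}, B ≤ Aᗮ → ∀ {a b : H}, a ∈ A → b ∈ B → ⟪a, b⟫_ℂ = 0 := by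
    intro A B h a b ha hb
    exact ((Submodule.mem_orthogonal _ _).mp (h hb)) a ha
  -- decomposition of the identity
  have decomp : ∀ y : H, (H1.orthogonalProjectionOnto y : H) + (H2.orthogonalProjectionOnto y : H)
      + (H3.orthogonalProjectionOnto y : H) = y := by
    intro y
    have hy : y ∈ H1 ⊔ H2 ⊔ H3 := by rw [hsum]; trivial
    rw [Submodule.mem_sup] at hy
    obtain ⟨w, hw, c, hc, rfl⟩ := hy
    rw [Submodule.mem_sup] at hw
    obtain ⟨a, ha, b, hb, rfl⟩ := hw
    have e1a : (H1.orthogonalProjectionOnto a : H) = a := Submodule.starProjection_eq_self_iff.mpr ha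
    have e2b : (H2.orthogonalProjectionOnto b : H) = b := Submodule.starProjection_eq_self_iff.mpr hb
    have e3c : (H3.orthogonalProjectionOnto c : H) = c := Submodule.starProjection_eq_self_iff.mpr hc
    have e1b : H1.orthogonalProjectionOnto b = 0 :=
      Submodule.orthogonalProjectionOnto_apply_of_mem_orthogonal (h12 hb)
    have e1c : H1.orthogonalProjectionOnto c = 0 :=
      Submodule.orthogonalProjectionOnto_apply_of_mem_orthogonal (h13 hc)
    have e2a : H2.orthogonalProjectionOnto a = 0 :=
      Submodule.orthogonalProjectionOnto_apply_of_mem_orthogonal (swap h12 ha)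
    have e2c : H2.orthogonalProjectionOnto c = 0 :=
      Submodule.orthogonalProjectionOnto_apply_of_mem_orthogonal (h23 hc)
    have e3a : H3.orthogonalProjectionOnto a = 0 :=
      Submodule.orthogonalProjectionOnto_apply_of_mem_orthogonal (swap h13 ha)
    have e3b : H3.orthogonalProjectionOnto b = 0 :=
      Submodule.orthogonalProjectionOnto_apply_of_mem_orthogonal (swap h23 hb)
    simp only [map_add, Submodule.coe_add, e1a, e2b, e3c, e1b, e1c, e2a, e2c, e3a, e3b,
      ZeroMemClass.coe_zero, add_zero, zero_add]
  -- S respects the decomposition on dS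
  have expand : ∀ y ∈ dS, S y = S (H1.orthogonalProjectionOnto y : H)
      + S (H2.orthogonalProjectionOnto y : H) + S (H3.orthogonalProjectionOnto y : H) := by
    intro y hy
    have h1 := hp1dom y hy; have h2 := hp2dom y hy; have h3 := hp3dom y hy
    conv_lhs => rw [← decomp y]
    rw [hS_add _ (hdom_add _ h1 _ h2) _ h3, hS_add _ h1 _ h2]
  -- uniqueness from density
  have uniq : ∀ v : H, (∀ ξ ∈ dS, ⟪v, ξ⟫_ℂ = 0) → v = 0 := by
    intro v hv
    have hcl : IsClosed {w : H | ⟪v, w⟫_ℂ = 0} :=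
      isClosed_eq (continuous_const.inner continuous_id) continuous_const
    have hsub : closure dS ⊆ {w : H | ⟪v, w⟫_ℂ = 0} := closure_minimal hv hcl
    exact inner_self_eq_zero.mp (hsub (hdense v))
  -- the master argument
  have master : ∀ pi : H → H,
      (∀ u v : H, ⟪pi u, v⟫_ℂ = ⟪u, pi v⟫_ℂ) →
      (∀ y ∈ dS, pi y ∈ dS) →
      (∀ u ∈ dS, ∀ v ∈ dS, ⟪S (pi u), S v⟫_ℂ = ⟪S u, S (pi v)⟫_ℂ) →
      S (pi x) ∈ dT ∧ T (S (pi x)) = pi (T (S x)) := by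
    intro pi hsa hdom hsym
    have key : ∀ ξ ∈ dS, ⟪pi (T (S x)), ξ⟫_ℂ = star ⟪S ξ, S (pi x)⟫_ℂ := by
      intro ξ hξ
      rw [hsa, hT (S x) hSx _ (hdom ξ hξ)]
      exact congrArg star (hsym ξ hξ x hx)
    have mem : S (pi x) ∈ dT := (hdT _).mpr ⟨pi (T (S x)), key⟩
    refine ⟨mem, sub_eq_zero.mp (uniq _ ?_)⟩
    intro ξ hξ
    rw [inner_sub_left, hT _ mem _ hξ, key ξ hξ, sub_self]
  -- symmetry facts for each projection
  have hsym1 : ∀ u ∈ dS, ∀ v ∈ dS,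
      ⟪S (H1.orthogonalProjectionOnto u : H), S v⟫_ℂ
        = ⟪S u, S (H1.orthogonalProjectionOnto v : H)⟫_ℂ := by
    intro u hu v hv
    rw [expand v hv]
    conv_rhs => rw [expand u hu]
    rw [inner_add_right, inner_add_right, inner_add_left, inner_add_left,
      oz (swap h23) (hS1 u hu) (hS2 v hv), oz (swap h13) (hS1 u hu) (hS3 v hv),
      oz h23 (hS2 u hu) (hS1 v hv), oz h13 (hS3 u hu) (hS1 v hv)]
  have hsym2 : ∀ u ∈ dS, ∀ v ∈ dS,
      ⟪S (H2.orthogonalProjectionOnto u : H), S v⟫_ℂ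
        = ⟪S u, S (H2.orthogonalProjectionOnto v : H)⟫_ℂ := by
    intro u hu v hv
    rw [expand v hv]
    conv_rhs => rw [expand u hu]
    rw [inner_add_right, inner_add_right, inner_add_left, inner_add_left,
      oz h23 (hS2 u hu) (hS1 v hv), oz (swap h12) (hS2 u hu) (hS3 v hv),
      oz (swap h23) (hS1 u hu) (hS2 v hv), oz h12 (hS3 u hu) (hS2 v hv)]
  have hsym3 : ∀ u ∈ dS, ∀ v ∈ dS,
      ⟪S (H3.orthogonalProjectionOnto u : H), S v⟫_ℂ
        = ⟪S u, S (H3.orthogonalProjectionOnto v : H)⟫_ℂ := by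
    intro u hu v hv
    rw [expand v hv]
    conv_rhs => rw [expand u hu]
    rw [inner_add_right, inner_add_right, inner_add_left, inner_add_left,
      oz h13 (hS3 u hu) (hS1 v hv), oz h12 (hS3 u hu) (hS2 v hv),
      oz (swap h13) (hS1 u hu) (hS3 v hv), oz (swap h12) (hS2 u hu) (hS3 v hv)]
  have m1 := master (fun y => (H1.orthogonalProjectionOnto y : H))
    (fun u v => Submodule.inner_starProjection_left_eq_right H1 u v) hp1dom hsym1
  have m2 := master (fun y => (H2.orthogonalProjectionOnto y : H))
    (fun u v => Submodule.inner_starProjection_left_eq_right H2 u v) hp2dom hsym2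
  have m3 := master (fun y => (H3.orthogonalProjectionOnto y : H))
    (fun u v => Submodule.inner_starProjection_left_eq_right H3 u v) hp3dom hsym3
  exact ⟨⟨⟨hp1dom x hx, m1.1⟩, m1.2⟩, ⟨⟨hp2dom x hx, m2.1⟩, m2.2⟩,
    ⟨⟨hp3dom x hx, m3.1⟩, m3.2⟩⟩
end
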